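/- arXiv:1403.7120 — 3 statements merged into one kernel-verified Lean document; each statement's English description precedes it below -/
import Mathlib

section
/- (Corollary 4.4, bounded case.) Under the Galerkin setup, let L be a fixed finite-dimensional subspace of H with orthogonal projection P, assume δ(L(Δ), L) < 1, let γ := min(σ(EPE) \ {0}), and let M_n be the span of the eigenvectors of Q_n P Q_n with eigenvalues in [γ/2, 1]. If in addition δ(L_n(Δ), L(Δ)) → 0, then for all sufficiently large n one has M_n = L_n(Δ), and consequently σ(A, M_n) = σ(A, L_n) ∩ Δ. -/
open Filter Metric
open scoped InnerProductSpace

noncomputable section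

variable {H : Type*} [NormedAddCommGroup H] [InnerProductSpace ℂ H] [CompleteSpace H]

/-- `δ(L, M)`: the supremum over unit vectors `u ∈ L` of `dist(u, M)`
(interpreted as `0` when `L` has no unit vectors). -/
def subDelta (L M : Submodule ℂ H) : ℝ :=
  sSup ((fun u => Metric.infDist u (M : Set H)) '' {u : H | u ∈ L ∧ ‖u‖ = 1})

/-- `δ̂(L, M) = max (δ(L,M), δ(M,L))`. -/
def subDeltaHat (L M : Submodule ℂ H) : ℝ := max (subDelta L M) (subDelta M L)

/-- `u` is a Galerkin eigenvector of `A` relative to the subspace `L` with eigenvalue `μ`: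
`u ∈ L`, `u ≠ 0` and `⟨A u, v⟩ = μ ⟨u, v⟩` for all `v ∈ L`. -/
def IsGalerkinEigenpair (A : H →L[ℂ] H) (L : Submodule ℂ H) (μ : ℝ) (u : H) : Prop :=
  u ∈ L ∧ u ≠ 0 ∧ ∀ v ∈ L, ⟪A u, v⟫_ℂ = (μ : ℂ) * ⟪u, v⟫_ℂ

/-- `σ(A, L)`: the Galerkin eigenvalues of `A` relative to `L`. -/
def galerkinSpectrum (A : H →L[ℂ] H) (L : Submodule ℂ H) : Set ℝ :=
  {μ | ∃ u, IsGalerkinEigenpair A L μ u}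

/-- `L(Δ)`-type subspace: the span of the Galerkin eigenvectors of `A` relative to `L`
whose eigenvalues lie in `[a, b]`. -/
def galerkinSubspace (A : H →L[ℂ] H) (L : Submodule ℂ H) (a b : ℝ) : Submodule ℂ H :=
  Submodule.span ℂ {u | ∃ μ ∈ Set.Icc a b, IsGalerkinEigenpair A L μ u}

/-- The span of the eigenvectors of `T` whose (real) eigenvalues lie in the set `s`. -/
def eigSpan (T : H →L[ℂ] H) (s : Set ℝ) : Submodule ℂ H :=
  Submodule.span ℂ {u | u ≠ 0 ∧ ∃ μ ∈ s, T u = (μ : ℂ) • u}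

/-!
On `L(Δ) = range E` the operator `EPE` has Rayleigh quotient `‖Pu‖² ≥ 1 - δ(L(Δ), 𝓛)² > 0`.
Since the range of `EPE` lies in the finite-dimensional `L(Δ)`, its nonzero spectrum consists of
these eigenvalues, so `γ > 0` and `‖Pw‖² ≥ γ‖w‖²` on `L(Δ)`. Once `Lₙ(Δ)` lies within `√γ/10` of
`L(Δ)`, every unit vector `u ∈ Lₙ(Δ)` has `‖Pu‖² ≥ γ/2`; hence `QₙPQₙ`, which maps into `Lₙ(Δ)`,
is diagonalised on `Lₙ(Δ)` with all eigenvalues in `[γ/2, 1]`, while its eigenvectors for nonzero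
eigenvalues lie in its range; so `Mₙ = Lₙ(Δ)`. The Galerkin eigenvalues on `Lₙ(Δ)` are those on `Lₙ`
lying in `Δ` because the compression of `A` to `Lₙ` leaves `Lₙ(Δ)` invariant.
-/

theorem isStarProjection_cfc {𝒜 : Type*} [TopologicalSpace 𝒜] [Ring 𝒜] [StarRing 𝒜]
    [Algebra ℝ 𝒜] [ContinuousFunctionalCalculus ℝ 𝒜 IsSelfAdjoint] {a : 𝒜}
    {f : ℝ → ℝ} (hf : ContinuousOn f (spectrum ℝ a))
    (h01 : ∀ x ∈ spectrum ℝ a, f x = 0 ∨ f x = 1) : IsStarProjection (cfc f a) := by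
  refine ⟨?_, cfc_predicate f a⟩
  rw [IsIdempotentElem, ← cfc_mul f f a]
  exact cfc_congr fun x hx => by rcases h01 x hx with h | h <;> simp [h]

section

variable {E : Type*} [NormedAddCommGroup E] [InnerProductSpace ℂ E] {T : E →L[ℂ] E}

theorem re_inner_apply_self_of_apply_eq_smul {v : E} (hv : ‖v‖ = 1) {μ : ℝ}
    (h : T v = (μ : ℂ) • v) : RCLike.re ⟪T v, v⟫_ℂ = μ := by
  simp [h, inner_self_eq_norm_sq_to_K, hv]

theorem mem_spectrum_of_apply_eq_smul {v : E} (hv : v ≠ 0) {μ : ℝ} (h : T v = (μ : ℂ) • v) :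
    μ ∈ spectrum ℝ T := by
  rintro ⟨u, hu⟩
  have hu0 : (u : E →L[ℂ] E) v = 0 := by
    rw [hu]
    simp [h, Algebra.algebraMap_eq_smul_one, Complex.coe_smul]
  apply hv
  calc v = ((↑u⁻¹ * ↑u : E →L[ℂ] E)) v := by rw [u.inv_mul]; rfl
    _ = 0 := by rw [mul_apply_eq_comp, hu0, map_zero]

variable {V : Submodule ℂ E} {ι : Type*} [Fintype ι]

open Polynomial in
/-- `X * ∏ i, (X - lam i)` annihilates `T`, so its roots contain the spectrum. -/
theorem exists_eigenvalue_eq_of_mem_spectrum (b : Module.Basis ι ℂ V) (lam : ι → ℝ)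
    (hb : ∀ i, T (b i) = (lam i : ℂ) • (b i : E)) (hTV : ∀ x, T x ∈ V) {μ : ℝ}
    (hμ : μ ∈ spectrum ℝ T) (hμ0 : μ ≠ 0) : ∃ i, lam i = μ := by
  classical
  set q : ℝ[X] := ∏ i, (X - C (lam i)) with hq_def
  have hq_basis : ∀ i, aeval T q (b i) = 0 := by
    intro i
    rw [hq_def, ← Finset.prod_erase_mul _ _ (Finset.mem_univ i), map_mul, mul_apply_eq_comp]
    convert map_zero (aeval T (∏ j ∈ Finset.univ.erase i, (X - C (lam j))))
    simp [hb, Algebra.algebraMap_eq_smul_one, Complex.coe_smul]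
  have hq : ∀ v : V, aeval T q v = 0 := by
    intro v
    rw [← b.sum_repr v, Submodule.coe_sum, map_sum]
    simp only [Submodule.coe_smul, map_smul, hq_basis, smul_zero, Finset.sum_const_zero]
  have hXq : aeval T (X * q) = 0 := by
    ext x
    rw [mul_comm, map_mul, mul_apply_eq_comp, aeval_X, hq ⟨_, hTV x⟩]
    rfl
  have hroot : μ * eval μ q = 0 := by
    have h : eval μ (X * q) ∈ spectrum ℝ (aeval T (X * q)) :=
      spectrum.subset_polynomial_aeval T (X * q) ⟨μ, hμ, rfl⟩
    rw [hXq, spectrum.mem_iff, sub_zero, eval_mul, eval_X] at h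
    exact not_not.mp fun hne => h ((isUnit_iff_ne_zero.mpr hne).map _)
  rw [hq_def, eval_prod] at hroot
  obtain ⟨i, -, hi⟩ := Finset.prod_eq_zero_iff.mp ((mul_eq_zero.mp hroot).resolve_left hμ0)
  exact ⟨i, by simpa [sub_eq_zero, eq_comm] using hi⟩

theorem mul_norm_sq_le_re_inner_of_eigenvectors (b : OrthonormalBasis ι ℂ V) (lam : ι → ℝ)
    (hb : ∀ i, T (b i) = (lam i : ℂ) • (b i : E)) {m : ℝ} (hm : ∀ i, m ≤ lam i) {w : E}
    (hw : w ∈ V) : m * ‖w‖ ^ 2 ≤ RCLike.re ⟪T w, w⟫_ℂ := by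
  set c : ι → ℂ := fun i => ⟪(b i : E), w⟫_ℂ
  have hsum : ∑ i, c i • (b i : E) = w := by
    simpa using congrArg Subtype.val (b.sum_repr' ⟨w, hw⟩)
  have hnorm : ∑ i, ‖c i‖ ^ 2 = ‖w‖ ^ 2 := b.sum_sq_norm_inner_right ⟨w, hw⟩
  have hinner : ⟪T w, w⟫_ℂ = ((∑ i, lam i * ‖c i‖ ^ 2 : ℝ) : ℂ) := by
    nth_rewrite 1 [← hsum]
    simp only [map_sum, map_smul, hb, smul_smul, sum_inner, inner_smul_left, Complex.ofReal_sum]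
    refine Finset.sum_congr rfl fun i _ => ?_
    rw [map_mul, Complex.conj_ofReal, mul_right_comm, RCLike.conj_mul]
    push_cast
    exact mul_comm _ _
  rw [hinner, ← hnorm, Finset.mul_sum, RCLike.re_to_complex, Complex.ofReal_re]
  exact Finset.sum_le_sum fun i _ => mul_le_mul_of_nonneg_right (hm i) (sq_nonneg _)

theorem subDelta_nonneg (L M : Submodule ℂ E) : 0 ≤ subDelta L M :=
  Real.sSup_nonneg (by rintro _ ⟨v, -, rfl⟩; exact infDist_nonneg)

theorem infDist_le_subDelta {L M : Submodule ℂ E} {u : E} (hu : u ∈ L) (hu1 : ‖u‖ = 1) :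
    infDist u M ≤ subDelta L M := by
  refine le_csSup ⟨1, ?_⟩ ⟨u, ⟨hu, hu1⟩, rfl⟩
  rintro _ ⟨v, ⟨-, hv⟩, rfl⟩
  simpa [hv] using infDist_le_dist_of_mem M.zero_mem (x := v)

theorem eigSpan_le_range {s : Set ℝ} (hs : 0 ∉ s) :
    eigSpan T s ≤ LinearMap.range (T : E →ₗ[ℂ] E) := by
  refine Submodule.span_le.mpr ?_
  rintro u ⟨-, μ, hμ, hTu⟩
  have hμ0 : (μ : ℂ) ≠ 0 := by exact_mod_cast ne_of_mem_of_not_mem hμ hs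
  refine ⟨(μ : ℂ)⁻¹ • u, ?_⟩
  change T ((μ : ℂ)⁻¹ • u) = u
  rw [map_smul, hTu, smul_smul, inv_mul_cancel₀ hμ0, one_smul]

end

theorem IsSelfAdjoint.exists_orthonormalBasis_eigenvectors {T : H →L[ℂ] H} (hT : IsSelfAdjoint T)
    {V : Submodule ℂ H} [FiniteDimensional ℂ V] (hV : ∀ v ∈ V, T v ∈ V) :
    ∃ (b : OrthonormalBasis (Fin (Module.finrank ℂ V)) ℂ V) (lam : Fin (Module.finrank ℂ V) → ℝ),
      ∀ i, T (b i) = (lam i : ℂ) • (b i : H) := by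
  have hT' := hT.isSymmetric.restrict_invariant hV
  exact ⟨hT'.eigenvectorBasis rfl, hT'.eigenvalues rfl,
    fun i => congrArg Subtype.val (hT'.apply_eigenvectorBasis rfl i)⟩

namespace IsStarProjection

variable {P : H →L[ℂ] H}

theorem apply_of_mem_range (hP : IsStarProjection P) {v : H}
    (hv : v ∈ LinearMap.range (P : H →ₗ[ℂ] H)) : P v = v := by
  obtain ⟨w, rfl⟩ := hv
  exact congr($(hP.isIdempotentElem.eq) w)

theorem norm_apply_le (hP : IsStarProjection P) (v : H) : ‖P v‖ ≤ ‖v‖ := by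
  simpa using P.le_of_opNorm_le (hP.norm_le P) v

theorem re_inner_apply_self (hP : IsStarProjection P) (v : H) :
    RCLike.re ⟪P v, v⟫_ℂ = ‖P v‖ ^ 2 := by
  obtain ⟨K, _, rfl⟩ := isStarProjection_iff_eq_starProjection.mp hP
  exact K.re_inner_starProjection_eq_normSq v

theorem norm_apply_sq_add_norm_sub_apply_sq (hP : IsStarProjection P) (v : H) :
    ‖P v‖ ^ 2 + ‖v - P v‖ ^ 2 = ‖v‖ ^ 2 := by
  obtain ⟨K, _, rfl⟩ := isStarProjection_iff_eq_starProjection.mp hP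
  rw [K.norm_sq_eq_add_norm_sq_starProjection v, K.starProjection_orthogonal']
  rfl

theorem norm_sub_apply_le_infDist (hP : IsStarProjection P) (v : H) :
    ‖v - P v‖ ≤ infDist v (LinearMap.range (P : H →ₗ[ℂ] H)) := by
  obtain ⟨K, _, rfl⟩ := isStarProjection_iff_eq_starProjection.mp hP
  rw [le_infDist ⟨0, Submodule.zero_mem _⟩, Submodule.range_starProjection]
  intro w hw
  rw [K.starProjection_minimal, dist_eq_norm]
  exact ciInf_le ⟨0, by rintro _ ⟨x, rfl⟩; positivity⟩ (⟨w, hw⟩ : K)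

theorem inner_mul_mul_apply_self (hP : IsStarProjection P) (S : H →L[ℂ] H) {v : H}
    (hv : v ∈ LinearMap.range (P : H →ₗ[ℂ] H)) : ⟪(P * S * P) v, v⟫_ℂ = ⟪S v, v⟫_ℂ := by
  rw [mul_apply_eq_comp, mul_apply_eq_comp, hP.apply_of_mem_range hv]
  exact (hP.isSelfAdjoint.isSymmetric _ _).trans
    (by rw [ContinuousLinearMap.coe_coe, hP.apply_of_mem_range hv])

theorem isSelfAdjoint_mul_mul (hP : IsStarProjection P) {S : H →L[ℂ] H} (hS : IsSelfAdjoint S) :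
    IsSelfAdjoint (P * S * P) := by
  simpa [hP.isSelfAdjoint.star_eq] using hS.conjugate P

end IsStarProjection

theorem one_sub_subDelta_sq_le_norm_apply_sq {P : H →L[ℂ] H} (hP : IsStarProjection P)
    {L : Submodule ℂ H} {u : H} (hu : u ∈ L) (hu1 : ‖u‖ = 1) :
    1 - subDelta L (LinearMap.range (P : H →ₗ[ℂ] H)) ^ 2 ≤ ‖P u‖ ^ 2 := by
  have hdist := (hP.norm_sub_apply_le_infDist u).trans (infDist_le_subDelta hu hu1)
  have hpyth := hP.norm_apply_sq_add_norm_sub_apply_sq u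
  rw [hu1] at hpyth
  nlinarith [pow_le_pow_left₀ (norm_nonneg _) hdist 2]

theorem le_eigSpan_of_forall_re_inner_mem {T : H →L[ℂ] H} (hT : IsSelfAdjoint T)
    {V : Submodule ℂ H} [FiniteDimensional ℂ V] (hV : ∀ v ∈ V, T v ∈ V) {s : Set ℝ}
    (hs : ∀ u ∈ V, ‖u‖ = 1 → RCLike.re ⟪T u, u⟫_ℂ ∈ s) : V ≤ eigSpan T s := by
  obtain ⟨b, lam, hb⟩ := hT.exists_orthonormalBasis_eigenvectors hV
  have hbs : ∀ i, (b i : H) ∈ eigSpan T s := fun i => by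
    have hnorm : ‖(b i : H)‖ = 1 := b.orthonormal.1 i
    refine Submodule.subset_span ⟨fun h => by simp [h] at hnorm, lam i, ?_, hb i⟩
    simpa [re_inner_apply_self_of_apply_eq_smul hnorm (hb i)] using hs _ (b i).2 hnorm
  intro v hv
  rw [show v = ((⟨v, hv⟩ : V) : H) from rfl, ← b.sum_repr' ⟨v, hv⟩, Submodule.coe_sum]
  exact Submodule.sum_mem _ fun i _ => Submodule.smul_mem _ _ (hbs i)

theorem eigSpan_mul_mul_eq_range {Q P : H →L[ℂ] H} (hQ : IsStarProjection Q)
    (hP : IsStarProjection P) [FiniteDimensional ℂ (LinearMap.range (Q : H →ₗ[ℂ] H))] {c : ℝ}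
    (hc : 0 < c) (h : ∀ u ∈ LinearMap.range (Q : H →ₗ[ℂ] H), ‖u‖ = 1 → c ≤ ‖P u‖ ^ 2) :
    eigSpan (Q * P * Q) (Set.Icc c 1) = LinearMap.range (Q : H →ₗ[ℂ] H) := by
  apply le_antisymm
  · refine (eigSpan_le_range fun h0 => hc.not_ge h0.1).trans ?_
    rintro _ ⟨x, rfl⟩
    exact ⟨P (Q x), rfl⟩
  · refine le_eigSpan_of_forall_re_inner_mem (hQ.isSelfAdjoint_mul_mul hP.isSelfAdjoint)
      (fun v _ => LinearMap.mem_range.mpr ⟨P (Q v), rfl⟩) fun u hu hu1 => ?_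
    rw [hQ.inner_mul_mul_apply_self P hu, hP.re_inner_apply_self]
    have hPu := hP.norm_apply_le u
    rw [hu1] at hPu
    exact ⟨h u hu hu1, by nlinarith [norm_nonneg (P u)]⟩

section Galerkin

variable {E : Type*} [NormedAddCommGroup E] [InnerProductSpace ℂ E] {A : E →L[ℂ] E}
  {L : Submodule ℂ E} {a b : ℝ}

theorem galerkinSubspace_le : galerkinSubspace A L a b ≤ L :=
  Submodule.span_le.mpr fun _ ⟨_, _, hu, _⟩ => hu

/-- The compression of `A` to `L` maps `galerkinSubspace A L a b` into itself. -/
theorem exists_mem_galerkinSubspace_inner_eq {x : E} (hx : x ∈ galerkinSubspace A L a b) :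
    ∃ g ∈ galerkinSubspace A L a b, ∀ v ∈ L, ⟪A x, v⟫_ℂ = ⟪g, v⟫_ℂ := by
  induction hx using Submodule.span_induction with
  | mem w hw =>
    obtain ⟨ν, hν, hwL, hw0, hAw⟩ := hw
    refine ⟨(ν : ℂ) • w, Submodule.smul_mem _ _ (Submodule.subset_span ⟨ν, hν, hwL, hw0, hAw⟩),
      fun v hv => ?_⟩
    rw [hAw v hv, inner_smul_left, Complex.conj_ofReal]
  | zero => exact ⟨0, Submodule.zero_mem _, by simp⟩
  | add x y _ _ hx hy =>
    obtain ⟨g, hg, hgx⟩ := hx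
    obtain ⟨h, hh, hhy⟩ := hy
    exact ⟨g + h, Submodule.add_mem _ hg hh, fun v hv => by
      rw [map_add, inner_add_left, inner_add_left, hgx v hv, hhy v hv]⟩
  | smul c x _ hx =>
    obtain ⟨g, hg, hgx⟩ := hx
    exact ⟨c • g, Submodule.smul_mem _ c hg, fun v hv => by
      rw [map_smul, inner_smul_left, inner_smul_left, hgx v hv]⟩

theorem IsGalerkinEigenpair.inner_eq_zero [CompleteSpace E] (hA : IsSelfAdjoint A) {μ ν : ℝ}
    {u w : E} (hu : IsGalerkinEigenpair A L μ u) (hw : IsGalerkinEigenpair A L ν w) (hμν : μ ≠ ν) :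
    ⟪u, w⟫_ℂ = 0 := by
  have h : (μ : ℂ) * ⟪u, w⟫_ℂ = ν * ⟪u, w⟫_ℂ :=
    calc (μ : ℂ) * ⟪u, w⟫_ℂ = ⟪A u, w⟫_ℂ := (hu.2.2 w hw.1).symm
      _ = ⟪u, A w⟫_ℂ := hA.isSymmetric u w
      _ = ν * ⟪u, w⟫_ℂ := by
        rw [← inner_conj_symm, hw.2.2 u hu.1, map_mul, Complex.conj_ofReal, inner_conj_symm]
  exact (mul_eq_mul_right_iff.mp h).resolve_left (by exact_mod_cast hμν)

theorem galerkinSpectrum_galerkinSubspace [CompleteSpace E] (hA : IsSelfAdjoint A) :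
    galerkinSpectrum A (galerkinSubspace A L a b) = galerkinSpectrum A L ∩ Set.Icc a b := by
  ext μ
  constructor
  · rintro ⟨u, huG, hu0, hAu⟩
    obtain ⟨g, hgG, hg⟩ := exists_mem_galerkinSubspace_inner_eq huG
    have hgu : g = (μ : ℂ) • u := by
      have h : ∀ v ∈ galerkinSubspace A L a b, ⟪g - (μ : ℂ) • u, v⟫_ℂ = 0 := fun v hv => by
        rw [inner_sub_left, ← hg v (galerkinSubspace_le hv), hAu v hv, inner_smul_left,
          Complex.conj_ofReal, sub_self]
      exact sub_eq_zero.mp (inner_self_eq_zero.mp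
        (h _ (Submodule.sub_mem _ hgG (Submodule.smul_mem _ _ huG))))
    have hL : IsGalerkinEigenpair A L μ u := ⟨galerkinSubspace_le huG, hu0, fun v hv => by
      rw [hg v hv, hgu, inner_smul_left, Complex.conj_ofReal]⟩
    refine ⟨⟨u, hL⟩, by_contra fun hμ => hu0 ?_⟩
    have hperp : galerkinSubspace A L a b ≤ (ℂ ∙ u)ᗮ := Submodule.span_le.mpr
      fun w ⟨ν, hν, hw⟩ => Submodule.mem_orthogonal_singleton_iff_inner_right.mpr
        (hL.inner_eq_zero hA hw (ne_of_mem_of_not_mem hν hμ).symm)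
    exact inner_self_eq_zero.mp (Submodule.mem_orthogonal_singleton_iff_inner_right.mp
      (hperp huG))
  · rintro ⟨⟨u, huL, hu0, hAu⟩, hμ⟩
    exact ⟨u, Submodule.subset_span ⟨μ, hμ, huL, hu0, hAu⟩, hu0,
      fun v hv => hAu v (galerkinSubspace_le hv)⟩

end Galerkin

theorem spectrum_gap_of_subDelta_lt_one {E P : H →L[ℂ] H} (hE : IsStarProjection E)
    (hP : IsStarProjection P) (hV : 0 < Module.finrank ℂ (LinearMap.range (E : H →ₗ[ℂ] H)))
    (hδ : subDelta (LinearMap.range (E : H →ₗ[ℂ] H)) (LinearMap.range (P : H →ₗ[ℂ] H)) < 1)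
    {γ : ℝ} (hγ : γ = sInf (spectrum ℝ (E * P * E) \ {0})) :
    0 < γ ∧ γ ≤ 1 ∧ ∀ w ∈ LinearMap.range (E : H →ₗ[ℂ] H), γ * ‖w‖ ^ 2 ≤ ‖P w‖ ^ 2 := by
  set V := LinearMap.range (E : H →ₗ[ℂ] H)
  set δ := subDelta V (LinearMap.range (P : H →ₗ[ℂ] H))
  have : FiniteDimensional ℂ V := Module.finite_of_finrank_pos hV
  have hTV : ∀ x, (E * P * E) x ∈ V := fun x => LinearMap.mem_range.mpr ⟨P (E x), rfl⟩
  have hT : IsSelfAdjoint (E * P * E) := hE.isSelfAdjoint_mul_mul hP.isSelfAdjoint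
  obtain ⟨b, lam, hb⟩ := hT.exists_orthonormalBasis_eigenvectors fun v _ => hTV v
  have hnorm : ∀ i, ‖(b i : H)‖ = 1 := fun i => b.orthonormal.1 i
  have hlam : ∀ i, lam i = ‖P (b i)‖ ^ 2 := fun i => by
    rw [← hP.re_inner_apply_self, ← hE.inner_mul_mul_apply_self P (b i).2,
      re_inner_apply_self_of_apply_eq_smul (hnorm i) (hb i)]
  have hlam_ge : ∀ i, 1 - δ ^ 2 ≤ lam i := fun i =>
    hlam i ▸ one_sub_subDelta_sq_le_norm_apply_sq hP (b i).2 (hnorm i)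
  have hgap : 0 < 1 - δ ^ 2 := by nlinarith [subDelta_nonneg V (LinearMap.range (P : H →ₗ[ℂ] H))]
  have hlam_mem : ∀ i, lam i ∈ spectrum ℝ (E * P * E) \ {0} := fun i =>
    ⟨mem_spectrum_of_apply_eq_smul (fun h => by simpa [h] using hnorm i) (hb i),
      ((hlam_ge i).trans_lt' hgap).ne'⟩
  have hγ_le : ∀ i, γ ≤ lam i := fun i =>
    hγ ▸ csInf_le ((spectrum.isCompact _).bddBelow.mono Set.sdiff_subset) (hlam_mem i)
  have hγ_ge : 1 - δ ^ 2 ≤ γ := hγ ▸ le_csInf ⟨_, hlam_mem ⟨0, hV⟩⟩ fun μ ⟨hμ, hμ0⟩ => by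
    obtain ⟨i, rfl⟩ := exists_eigenvalue_eq_of_mem_spectrum b.toBasis lam (by simpa using hb) hTV
      hμ hμ0
    exact hlam_ge i
  refine ⟨hgap.trans_le hγ_ge, (hγ_le ⟨0, hV⟩).trans ?_, fun w hw => ?_⟩
  · rw [hlam, ← one_pow 2, ← hnorm]
    exact pow_le_pow_left₀ (norm_nonneg _) (hP.norm_apply_le _) 2
  · rw [← hP.re_inner_apply_self, ← hE.inner_mul_mul_apply_self P hw]
    exact mul_norm_sq_le_re_inner_of_eigenvectors b lam hb hγ_le hw

theorem half_le_norm_apply_sq_of_infDist_lt {P : H →L[ℂ] H} (hP : IsStarProjection P)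
    {V : Submodule ℂ H} {γ : ℝ} (hγ : γ ≤ 1) (hV : ∀ w ∈ V, γ * ‖w‖ ^ 2 ≤ ‖P w‖ ^ 2) {u : H}
    (hu : ‖u‖ = 1) (hd : infDist u V < √γ / 10) : γ / 2 ≤ ‖P u‖ ^ 2 := by
  obtain ⟨w, hw, huw⟩ := (infDist_lt_iff ⟨0, V.zero_mem⟩).mp hd
  rw [dist_eq_norm] at huw
  have hγ0 : 0 < γ := Real.sqrt_pos.mp (by linarith [infDist_nonneg (x := u) (s := (V : Set H))])
  have hs : √γ ^ 2 = γ := Real.sq_sqrt hγ0.le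
  have hs1 : √γ ≤ 1 := Real.sqrt_le_one.mpr hγ
  have hPw : √γ * ‖w‖ ≤ ‖P w‖ := by
    rw [← Real.sqrt_sq (norm_nonneg (P w)), ← Real.sqrt_sq (norm_nonneg w), ← Real.sqrt_mul hγ0.le]
    exact Real.sqrt_le_sqrt (hV w hw)
  have hw1 : 1 - √γ / 10 ≤ ‖w‖ := by linarith [norm_sub_norm_le u w]
  have hPuw : ‖P w‖ - ‖P u‖ ≤ ‖u - w‖ := by
    calc ‖P w‖ - ‖P u‖ ≤ ‖P (w - u)‖ := by rw [map_sub]; exact norm_sub_norm_le _ _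
      _ ≤ ‖u - w‖ := by rw [norm_sub_rev]; exact hP.norm_apply_le _
  have hPu : 4 / 5 * √γ ≤ ‖P u‖ := by nlinarith [Real.sqrt_nonneg γ]
  nlinarith [pow_le_pow_left₀ (by positivity) hPu 2]

theorem stmt1_general
    (A : H →L[ℂ] H) (hA : IsSelfAdjoint A)
    (a b : ℝ)
    (f : ℝ → ℝ) (hf : ContinuousOn f (spectrum ℝ A))
    (hf1 : ∀ x ∈ spectrum ℝ A ∩ Set.Icc a b, f x = 1)
    (hf0 : ∀ x ∈ spectrum ℝ A \ Set.Icc a b, f x = 0)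
    (E : H →L[ℂ] H) (hE : E = cfc f A)
    (d : ℕ) (hd1 : 1 ≤ d)
    (hd : Module.finrank ℂ (LinearMap.range (E : H →ₗ[ℂ] H)) = d)
    (L : ℕ → Submodule ℂ H) [∀ n, FiniteDimensional ℂ (L n)]
    (Q : ℕ → (H →L[ℂ] H))
    (hQ : ∀ n, IsIdempotentElem (Q n) ∧ IsSelfAdjoint (Q n) ∧
      LinearMap.range (Q n : H →ₗ[ℂ] H) = galerkinSubspace A (L n) a b)
    -- the fixed finite-dimensional subspace `𝓛` with orthogonal projection `P`
    (𝓛 : Submodule ℂ H)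
    (P : H →L[ℂ] H)
    (hP : IsIdempotentElem P ∧ IsSelfAdjoint P ∧ LinearMap.range (P : H →ₗ[ℂ] H) = 𝓛)
    (hsep : subDelta (LinearMap.range (E : H →ₗ[ℂ] H)) 𝓛 < 1)
    -- `γ := min (σ(EPE) \ {0})`
    (γ : ℝ) (hγ : γ = sInf (spectrum ℝ (E * P * E) \ {0}))
    -- `M n` is the span of eigenvectors of `Qₙ P Qₙ` with eigenvalues in `[γ/2, 1]`
    (M : ℕ → Submodule ℂ H)
    (hM : ∀ n, M n = eigSpan (Q n * P * Q n) (Set.Icc (γ / 2) 1))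
    -- no spectral pollution: `δ(Lₙ(Δ), L(Δ)) → 0`
    (hnopoll : Tendsto
      (fun n => subDelta (galerkinSubspace A (L n) a b) (LinearMap.range (E : H →ₗ[ℂ] H)))
      atTop (nhds 0)) :
    ∀ᶠ n in atTop,
      M n = galerkinSubspace A (L n) a b ∧
      galerkinSpectrum A (M n) = galerkinSpectrum A (L n) ∩ Set.Icc a b := by
  obtain ⟨hPi, hPs, rfl⟩ := hP
  have hPproj : IsStarProjection P := ⟨hPi, hPs⟩
  have hEproj : IsStarProjection E := by
    rw [hE]
    refine isStarProjection_cfc hf fun x hx => ?_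
    by_cases hxΔ : x ∈ Set.Icc a b
    exacts [Or.inr (hf1 x ⟨hx, hxΔ⟩), Or.inl (hf0 x ⟨hx, hxΔ⟩)]
  obtain ⟨hγ0, hγ1, hγV⟩ := spectrum_gap_of_subDelta_lt_one hEproj hPproj (by omega) hsep hγ
  filter_upwards [hnopoll.eventually_lt_const (by positivity : (0 : ℝ) < √γ / 10)] with n hn
  obtain ⟨hQi, hQs, hQr⟩ := hQ n
  have : FiniteDimensional ℂ (LinearMap.range (Q n : H →ₗ[ℂ] H)) :=
    hQr ▸ Submodule.finiteDimensional_of_le galerkinSubspace_le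
  have hMG : M n = galerkinSubspace A (L n) a b := by
    rw [hM n, ← hQr]
    refine eigSpan_mul_mul_eq_range ⟨hQi, hQs⟩ hPproj (by positivity) fun u hu hu1 => ?_
    exact half_le_norm_apply_sq_of_infDist_lt hPproj hγ1 hγV hu1
      ((infDist_le_subDelta (hQr ▸ hu) hu1).trans_lt hn)
  exact ⟨hMG, hMG ▸ galerkinSpectrum_galerkinSubspace hA⟩

theorem stmt1
    (A : H →L[ℂ] H) (hA : IsSelfAdjoint A)
    (a b : ℝ) (hab : a < b)
    (ha : a ∉ spectrum ℝ A) (hb : b ∉ spectrum ℝ A)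
    (f : ℝ → ℝ) (hf : ContinuousOn f (spectrum ℝ A))
    (hf1 : ∀ x ∈ spectrum ℝ A ∩ Set.Icc a b, f x = 1)
    (hf0 : ∀ x ∈ spectrum ℝ A \ Set.Icc a b, f x = 0)
    (E : H →L[ℂ] H) (hE : E = cfc f A)
    (d : ℕ) (hd1 : 1 ≤ d)
    [FiniteDimensional ℂ (LinearMap.range (E : H →ₗ[ℂ] H))]
    (hd : Module.finrank ℂ (LinearMap.range (E : H →ₗ[ℂ] H)) = d)
    (L : ℕ → Submodule ℂ H) [∀ n, FiniteDimensional ℂ (L n)]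
    (hL : ∀ u : H, Tendsto (fun n => Metric.infDist u ((L n : Set H))) atTop (nhds 0))
    (Q : ℕ → (H →L[ℂ] H))
    (hQ : ∀ n, IsIdempotentElem (Q n) ∧ IsSelfAdjoint (Q n) ∧
      LinearMap.range (Q n : H →ₗ[ℂ] H) = galerkinSubspace A (L n) a b)
    -- the fixed finite-dimensional subspace `𝓛` with orthogonal projection `P`
    (𝓛 : Submodule ℂ H) [FiniteDimensional ℂ 𝓛]
    (P : H →L[ℂ] H)
    (hP : IsIdempotentElem P ∧ IsSelfAdjoint P ∧ LinearMap.range (P : H →ₗ[ℂ] H) = 𝓛)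
    (hsep : subDelta (LinearMap.range (E : H →ₗ[ℂ] H)) 𝓛 < 1)
    -- `γ := min (σ(EPE) \ {0})`
    (γ : ℝ) (hγ : γ = sInf (spectrum ℝ (E * P * E) \ {0}))
    -- `M n` is the span of eigenvectors of `Qₙ P Qₙ` with eigenvalues in `[γ/2, 1]`
    (M : ℕ → Submodule ℂ H)
    (hM : ∀ n, M n = eigSpan (Q n * P * Q n) (Set.Icc (γ / 2) 1))
    -- no spectral pollution: `δ(Lₙ(Δ), L(Δ)) → 0`
    (hnopoll : Tendsto
      (fun n => subDelta (galerkinSubspace A (L n) a b) (LinearMap.range (E : H →ₗ[ℂ] H)))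
      atTop (nhds 0)) :
    ∀ᶠ n in atTop,
      M n = galerkinSubspace A (L n) a b ∧
      galerkinSpectrum A (M n) = galerkinSpectrum A (L n) ∩ Set.Icc a b :=
  stmt1_general A hA a b f hf hf1 hf0 E hE d hd1 hd L Q hQ 𝓛 P hP hsep γ hγ M hM hnopoll

end
end

section
/- (Lemma 2.2, bounded version.) Let H be a nontrivial complex Hilbert space, A : H → H a bounded self-adjoint operator, m := min σ(A), B := A − (m−1)·I (so that ⟨Bu, u⟩ ≥ ‖u‖² for all u), and S the positive square root of B given by the continuous functional calculus (S is positive, self-adjoint and invertible). Let (L_n) be a sequence of finite-dimensional subspaces of H such that for every u ∈ H there exist u_n ∈ L_n with ‖S(u_n − u)‖ → 0. Let P̃_n be the orthogonal projection of H onto the image S(L_n). Then for every u ∈ H, ‖P̃_n u − u‖ → 0 as n → ∞. -/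
open Filter Metric
open scoped InnerProductSpace

noncomputable section

/-
Shifting `A` so that its spectrum starts at `1` makes `B` self-adjoint with `σ(B) ⊆ [1, ∞)`, so
its square root `S` is invertible and every `u` is `S w` for some `w`. If `uₙ ∈ Lₙ` approximate `w`
in the sense `‖S (uₙ - w)‖ → 0`, then `S uₙ ∈ S(Lₙ)` approximate `u` in norm, and the orthogonal
projection onto `S(Lₙ)` is a best approximation: `‖P̃ₙ u - u‖ ≤ ‖S uₙ - u‖`.
-/

theorem IsStarProjection.norm_apply_sub_le {𝕜 H : Type*} [RCLike 𝕜] [NormedAddCommGroup H]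
    [InnerProductSpace 𝕜 H] [CompleteSpace H] {P : H →L[𝕜] H} (hP : IsStarProjection P)
    {y : H} (hy : P y = y) (u : H) : ‖P u - u‖ ≤ ‖y - u‖ :=
  calc ‖P u - u‖ = ‖(1 - P) (y - u)‖ := by simp [hy]
    _ ≤ ‖1 - P‖ * ‖y - u‖ := (1 - P).le_opNorm _
    _ ≤ 1 * ‖y - u‖ := by gcongr; exact hP.one_sub.norm_le
    _ = ‖y - u‖ := one_mul _

theorem one_le_of_mem_spectrum_sub_algebraMap_sInf_sub_one {A : Type*} [Ring A] [Algebra ℝ A]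
    {a : A} (ha : BddBelow (spectrum ℝ a)) {x : ℝ}
    (hx : x ∈ spectrum ℝ (a - algebraMap ℝ A (sInf (spectrum ℝ a) - 1))) : 1 ≤ x := by
  rw [← spectrum.sub_singleton_eq] at hx
  obtain ⟨y, hy, _, rfl, rfl⟩ := hx
  linarith [csInf_le ha hy]

theorem isUnit_cfc_sqrt {A : Type*} [Ring A] [StarRing A] [Algebra ℝ A] [TopologicalSpace A]
    [ContinuousFunctionalCalculus ℝ A IsSelfAdjoint] {b : A} (hb : IsSelfAdjoint b)
    (hspec : ∀ x ∈ spectrum ℝ b, 0 < x) : IsUnit (cfc Real.sqrt b) :=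
  (isUnit_cfc_iff Real.sqrt b).mpr fun x hx => (Real.sqrt_pos.mpr (hspec x hx)).ne'

theorem stmt4_general
    {H : Type*} [NormedAddCommGroup H] [InnerProductSpace ℂ H] [CompleteSpace H]
    (A : H →L[ℂ] H) (hA : IsSelfAdjoint A)
    -- `m := min σ(A)`
    (m : ℝ) (hm : m = sInf (spectrum ℝ A))
    -- `B := A − (m−1)·I`
    (B : H →L[ℂ] H) (hB : B = A - (m - 1 : ℂ) • (1 : H →L[ℂ] H))
    -- `S` is the positive square root of `B` given by the continuous functional calculus
    (S : H →L[ℂ] H) (hS : S = cfc Real.sqrt B)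
    -- the trial spaces
    (L : ℕ → Submodule ℂ H)
    (hL : ∀ u : H, ∃ un : ℕ → H, (∀ n, un n ∈ L n) ∧
      Tendsto (fun n => ‖S (un n - u)‖) atTop (nhds 0))
    -- `P̃ₙ` is the orthogonal projection of `H` onto `S(Lₙ)`
    (Pt : ℕ → (H →L[ℂ] H))
    (hPt : ∀ n, IsIdempotentElem (Pt n) ∧ IsSelfAdjoint (Pt n) ∧
      LinearMap.range (Pt n : H →ₗ[ℂ] H) = (L n).map (S : H →ₗ[ℂ] H)) :
    ∀ u : H, Tendsto (fun n => ‖Pt n u - u‖) atTop (nhds 0) := by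
  have hB' : B = A - algebraMap ℝ _ (sInf (spectrum ℝ A) - 1) := by
    rw [hB, hm, Algebra.algebraMap_eq_smul_one, ← Complex.coe_smul]; push_cast; rfl
  have hSunit : IsUnit S := hS ▸ isUnit_cfc_sqrt (hB' ▸ hA.sub (.algebraMap _ (.all _)))
    fun x hx => one_pos.trans_le <| one_le_of_mem_spectrum_sub_algebraMap_sInf_sub_one
      (spectrum.isCompact A).bddBelow (hB' ▸ hx)
  intro u
  obtain ⟨w, rfl⟩ := (ContinuousLinearMap.isUnit_iff_bijective.mp hSunit).surjective u
  obtain ⟨un, hun, hconv⟩ := hL w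
  have hbest : ∀ n, ‖Pt n (S w) - S w‖ ≤ ‖S (un n - w)‖ := fun n => by
    obtain ⟨hidem, hsa, hrange⟩ := hPt n
    have hfix : Pt n (S (un n)) = S (un n) := by
      refine (LinearMap.IsIdempotentElem.mem_range_iff
        (ContinuousLinearMap.isIdempotentElem_toLinearMap_iff.mpr hidem)).mp ?_
      exact hrange ▸ Submodule.mem_map_of_mem (hun n)
    simpa only [map_sub] using (IsStarProjection.mk hidem hsa).norm_apply_sub_le hfix (S w)
  exact squeeze_zero (fun n => norm_nonneg _) hbest hconv

theorem stmt4
    {H : Type*} [NormedAddCommGroup H] [InnerProductSpace ℂ H] [CompleteSpace H]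
    [Nontrivial H]
    (A : H →L[ℂ] H) (hA : IsSelfAdjoint A)
    -- `m := min σ(A)`
    (m : ℝ) (hm : m = sInf (spectrum ℝ A))
    -- `B := A − (m−1)·I`
    (B : H →L[ℂ] H) (hB : B = A - (m - 1 : ℂ) • (1 : H →L[ℂ] H))
    -- `S` is the positive square root of `B` given by the continuous functional calculus
    (S : H →L[ℂ] H) (hS : S = cfc Real.sqrt B)
    -- the trial spaces
    (L : ℕ → Submodule ℂ H) [∀ n, FiniteDimensional ℂ (L n)]
    (hL : ∀ u : H, ∃ un : ℕ → H, (∀ n, un n ∈ L n) ∧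
      Tendsto (fun n => ‖S (un n - u)‖) atTop (nhds 0))
    -- `P̃ₙ` is the orthogonal projection of `H` onto `S(Lₙ)`
    (Pt : ℕ → (H →L[ℂ] H))
    (hPt : ∀ n, IsIdempotentElem (Pt n) ∧ IsSelfAdjoint (Pt n) ∧
      LinearMap.range (Pt n : H →ₗ[ℂ] H) = (L n).map (S : H →ₗ[ℂ] H)) :
    ∀ u : H, Tendsto (fun n => ‖Pt n u - u‖) atTop (nhds 0) :=
  stmt4_general A hA m hm B hB S hS L hL Pt hPt

end
end

section
/- (Lemma 4.2, abstract form.) Let H be an infinite-dimensional complex Hilbert space, let E and P be finite-rank orthogonal projections on H, and let (Q_n) be a sequence of orthogonal projections on H converging strongly to E, i.e. ‖Q_n u − E u‖ → 0 for every u ∈ H. Then the spectra of Q_n P Q_n converge to the spectrum of EPE in the Hausdorff distance: d_H(σ(Q_n P Q_n), σ(EPE)) → 0 as n → ∞. -/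
/-!
Because `P` has finite rank, strong convergence `Q n → E` upgrades to norm convergence
`(Q n - E) * P → 0`, and `‖Q n * P * Q n - E * P * E‖ ≤ 2 * ‖(Q n - E) * P‖`. For normal elements
of a C⋆-algebra the spectrum is `1`-Lipschitz for the Hausdorff distance, since the resolvent
satisfies `‖(z - b)⁻¹‖ ≤ dist(z, σ b)⁻¹` by the continuous functional calculus.
-/

open Filter Metric Topology

section Resolvent

variable {𝕜 A : Type*} [NontriviallyNormedField 𝕜] [NormedRing A] [NormedAlgebra 𝕜 A]
  [CompleteSpace A]

lemma notMem_spectrum_of_norm_resolvent_mul_lt_one {a b : A} {z : 𝕜} (hz : z ∉ spectrum 𝕜 b)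
    (h : ‖resolvent b z‖ * ‖a - b‖ < 1) : z ∉ spectrum 𝕜 a := by
  obtain ⟨u, hu⟩ := spectrum.notMem_iff.mp hz
  rw [resolvent, ← hu, Ring.inverse_unit] at h
  have hfac : algebraMap 𝕜 A z - a = u * (1 - ↑u⁻¹ * (a - b)) := by
    rw [mul_sub, mul_one, ← mul_assoc, u.mul_inv, one_mul, hu]
    abel
  rw [spectrum.notMem_iff, hfac]
  exact u.isUnit.mul (Units.oneSub _ ((norm_mul_le _ _).trans_lt h)).isUnit

end Resolvent

section CStarAlgebra

variable {A : Type*} [CStarAlgebra A]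

lemma norm_resolvent_le_inv_infDist (b : A) [IsStarNormal b] (z : ℂ) :
    ‖resolvent b z‖ ≤ (infDist z (spectrum ℂ b))⁻¹ := by
  by_cases hz : z ∈ spectrum ℂ b
  · simp [resolvent, Ring.inverse_non_unit _ (spectrum.mem_iff.mp hz), infDist_zero_of_mem hz]
  have hne : ∀ x ∈ spectrum ℂ b, z - x ≠ 0 := fun x hx h => hz (sub_eq_zero.mp h ▸ hx)
  have hres : resolvent b z = cfc (fun x => (z - x)⁻¹) b := by
    rw [cfc_inv (fun x => z - x) b hne, cfc_sub (fun _ => z) (fun x => x) b, cfc_const z b,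
      cfc_id' ℂ b, resolvent]
  rw [hres]
  refine norm_cfc_le (inv_nonneg.mpr infDist_nonneg) fun x hx => ?_
  have hpos : 0 < infDist z (spectrum ℂ b) :=
    ((spectrum.isClosed b).notMem_iff_infDist_pos ⟨x, hx⟩).mp hz
  rw [norm_inv]
  exact inv_anti₀ hpos (dist_eq_norm z x ▸ infDist_le_dist_of_mem hx)

lemma infDist_spectrum_le_norm_sub {a : A} (b : A) [IsStarNormal b] {z : ℂ}
    (hz : z ∈ spectrum ℂ a) : infDist z (spectrum ℂ b) ≤ ‖a - b‖ := by
  by_contra! h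
  have hpos : 0 < infDist z (spectrum ℂ b) := (norm_nonneg _).trans_lt h
  refine notMem_spectrum_of_norm_resolvent_mul_lt_one (b := b) (fun hzb => ?_) ?_ hz
  · exact hpos.ne' (infDist_zero_of_mem hzb)
  calc ‖resolvent b z‖ * ‖a - b‖ ≤ (infDist z (spectrum ℂ b))⁻¹ * ‖a - b‖ := by
        gcongr; exact norm_resolvent_le_inv_infDist b z
    _ < (infDist z (spectrum ℂ b))⁻¹ * infDist z (spectrum ℂ b) := by gcongr
    _ = 1 := inv_mul_cancel₀ hpos.ne'

lemma hausdorffDist_spectrum_le_norm_sub (a b : A) [IsStarNormal a] [IsStarNormal b] :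
    hausdorffDist (spectrum ℂ a) (spectrum ℂ b) ≤ ‖a - b‖ :=
  hausdorffDist_le_of_infDist (norm_nonneg _) (fun _ hz => infDist_spectrum_le_norm_sub b hz)
    fun _ hz => norm_sub_rev a b ▸ infDist_spectrum_le_norm_sub a hz

end CStarAlgebra

lemma norm_conj_sub_conj_le {A : Type*} [NormedRing A] [StarRing A] [CStarRing A] {e q p : A}
    (he : IsStarProjection e) (hq : IsStarProjection q) (hp : IsSelfAdjoint p) :
    ‖q * p * q - e * p * e‖ ≤ 2 * ‖(q - e) * p‖ := by
  have hsym : ‖p * (q - e)‖ = ‖(q - e) * p‖ := by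
    rw [← norm_star ((q - e) * p), star_mul, hp.star_eq,
      (hq.isSelfAdjoint.sub he.isSelfAdjoint).star_eq]
  calc ‖q * p * q - e * p * e‖ = ‖q * (p * (q - e)) + (q - e) * p * e‖ := by noncomm_ring
    _ ≤ ‖q‖ * ‖p * (q - e)‖ + ‖(q - e) * p‖ * ‖e‖ :=
        (norm_add_le _ _).trans (add_le_add (norm_mul_le _ _) (norm_mul_le _ _))
    _ ≤ 1 * ‖p * (q - e)‖ + ‖(q - e) * p‖ * 1 := by
        gcongr
        exacts [hq.norm_le, he.norm_le]
    _ = 2 * ‖(q - e) * p‖ := by rw [hsym]; ring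

lemma tendsto_comp_of_finiteDimensional_range {𝕜 E F G ι : Type*} [NontriviallyNormedField 𝕜]
    [CompleteSpace 𝕜] [SeminormedAddCommGroup E] [NormedSpace 𝕜 E] [NormedAddCommGroup F]
    [NormedSpace 𝕜 F] [NormedAddCommGroup G] [NormedSpace 𝕜 G] {l : Filter ι}
    {T : ι → F →L[𝕜] G} (K : E →L[𝕜] F) [FiniteDimensional 𝕜 (LinearMap.range (K : E →ₗ[𝕜] F))]
    (hT : ∀ x, Tendsto (fun i => T i x) l (𝓝 0)) :
    Tendsto (fun i => (T i).comp K) l (𝓝 0) := by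
  set V := LinearMap.range (K : E →ₗ[𝕜] F)
  let b := Module.finBasis 𝕜 V
  obtain ⟨C, -, hC⟩ := b.exists_opNorm_le (F := G)
  have hV : Tendsto (fun i => (T i).comp V.subtypeL) l (𝓝 0) := by
    refine squeeze_zero_norm (fun i => hC (Finset.sum_nonneg fun j _ => norm_nonneg (T i (b j)))
      fun j => Finset.single_le_sum (f := fun j => ‖T i (b j)‖)
        (fun j _ => norm_nonneg _) (Finset.mem_univ j)) ?_
    simpa using (tendsto_finsetSum Finset.univ fun j _ => (hT (b j)).norm).const_mul C
  -- `K` is definitionally `V.subtypeL.comp (K.codRestrict V _)`.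
  exact (((ContinuousLinearMap.compL 𝕜 E V G).flip
    (K.codRestrict V (LinearMap.mem_range_self (K : E →ₗ[𝕜] F)))).continuous.tendsto 0).comp hV

theorem stmt11_general
    {H : Type*} [NormedAddCommGroup H] [InnerProductSpace ℂ H] [CompleteSpace H]
    (E P : H →L[ℂ] H)
    (hE : IsIdempotentElem E ∧ IsSelfAdjoint E)
    (hP : IsIdempotentElem P ∧ IsSelfAdjoint P)
    (hPfr : FiniteDimensional ℂ (LinearMap.range (P : H →ₗ[ℂ] H)))
    (Q : ℕ → (H →L[ℂ] H))
    (hQ : ∀ n, IsIdempotentElem (Q n) ∧ IsSelfAdjoint (Q n))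
    (hconv : ∀ u : H, Tendsto (fun n => ‖Q n u - E u‖) atTop (nhds 0)) :
    Tendsto (fun n =>
        Metric.hausdorffDist (spectrum ℂ (Q n * P * Q n)) (spectrum ℂ (E * P * E)))
      atTop (nhds 0) := by
  have hEPE : IsStarNormal (E * P * E) := (hP.2.conjugate_self hE.2).isStarNormal
  have hQPQ n : IsStarNormal (Q n * P * Q n) := (hP.2.conjugate_self (hQ n).2).isStarNormal
  have hdiff : Tendsto (fun n => ‖(Q n - E) * P‖) atTop (𝓝 0) := by
    have h := (tendsto_comp_of_finiteDimensional_range (T := fun n => Q n - E) P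
      fun u => tendsto_zero_iff_norm_tendsto_zero.mpr (hconv u)).norm
    rwa [norm_zero] at h
  refine squeeze_zero (fun _ => hausdorffDist_nonneg) (fun n => ?_) (by simpa using hdiff.const_mul 2)
  exact (hausdorffDist_spectrum_le_norm_sub _ _).trans
    (norm_conj_sub_conj_le ⟨hE.1, hE.2⟩ ⟨(hQ n).1, (hQ n).2⟩ hP.2)

theorem stmt11
    {H : Type*} [NormedAddCommGroup H] [InnerProductSpace ℂ H] [CompleteSpace H]
    (hinf : ¬ FiniteDimensional ℂ H)
    (E P : H →L[ℂ] H)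
    (hE : IsIdempotentElem E ∧ IsSelfAdjoint E)
    (hP : IsIdempotentElem P ∧ IsSelfAdjoint P)
    (hEfr : FiniteDimensional ℂ (LinearMap.range (E : H →ₗ[ℂ] H)))
    (hPfr : FiniteDimensional ℂ (LinearMap.range (P : H →ₗ[ℂ] H)))
    (Q : ℕ → (H →L[ℂ] H))
    (hQ : ∀ n, IsIdempotentElem (Q n) ∧ IsSelfAdjoint (Q n))
    (hconv : ∀ u : H, Tendsto (fun n => ‖Q n u - E u‖) atTop (nhds 0)) :
    Tendsto (fun n =>
        Metric.hausdorffDist (spectrum ℂ (Q n * P * Q n)) (spectrum ℂ (E * P * E)))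
      atTop (nhds 0) :=
  stmt11_general E P hE hP hPfr Q hQ hconv
end
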